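/- arXiv:2110.06260 — 7 statements merged into one kernel-verified Lean document; each statement's English description precedes it below -/
import Mathlib

section
/- Let K be a totally real number field with discriminant Δ. For every totally positive element α of the ring of integers O_K with norm N_{K/ℚ}(α) > Δ there exists β ∈ O_K such that α − β² is totally positive. In particular, every indecomposable element of O_K⁺ has norm at most Δ. -/
open NumberField

/-- A number field is totally real if every complex embedding has image contained in `ℝ`. -/
def IsTotallyRealField (K : Type) [Field K] : Prop :=
  ∀ σ : K →+* ℂ, ∀ x : K, (σ x).im = 0

/-- An element of a field is totally positive if it is positive under every real embedding. -/
def TotallyPositive {K : Type} [Field K] (x : K) : Prop :=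
  ∀ σ : K →+* ℝ, 0 < σ x

/-!
In a totally real field of degree `n` the lattice `𝓞 K ⊆ ℝⁿ` has covolume `√Δ`, while the box
`{x : |σ x| < √(σ α) for all σ}` has volume `2ⁿ √(N α)`. When `N α > Δ`, Minkowski's convex body
theorem yields a nonzero `β ∈ 𝓞 K` in the box, i.e. `σ(β)² < σ(α)` for every real embedding `σ`.
Then `β²` and `α - β²` are both totally positive, so `α` is decomposable.
-/

open NumberField.InfinitePlace NumberField.mixedEmbedding
open scoped NNReal

theorem IsTotallyRealField.isTotallyReal {K : Type} [Field K] (hK : IsTotallyRealField K) :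
    IsTotallyReal K where
  isReal w := by
    rw [isReal_iff, ComplexEmbedding.isReal_iff]
    ext x
    rw [ComplexEmbedding.conjugate_coe_eq]
    exact Complex.conj_eq_iff_im.mpr (hK w.embedding x)

theorem NumberField.InfinitePlace.mk_ofRealHom_comp_apply {K : Type*} [Field K]
    (σ : K →+* ℝ) (x : K) : mk (Complex.ofRealHom.comp σ) x = |σ x| := by
  rw [apply, RingHom.comp_apply, Complex.ofRealHom_eq_coe, Complex.norm_real, Real.norm_eq_abs]

theorem totallyPositive_sq_of_ne_zero {K : Type} [Field K] {x : K} (hx : x ≠ 0) :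
    TotallyPositive (x ^ 2) := fun σ ↦ by
  rw [map_pow]
  exact sq_pos_of_ne_zero ((map_ne_zero σ).mpr hx)

namespace NumberField

variable {K : Type*} [Field K] [NumberField K] [IsTotallyReal K]

variable (K) in
theorem discr_pos_of_isTotallyReal : 0 < discr K := by
  have h := sign_discr K
  rwa [IsTotallyReal.nrComplexPlaces_eq_zero, pow_zero, Int.sign_eq_one_iff_pos] at h

theorem exists_ne_zero_lt_of_sqrt_discr_lt {f : InfinitePlace K → ℝ≥0}
    (h : NNReal.sqrt ‖discr K‖₊ < ∏ w, f w) :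
    ∃ a : 𝓞 K, a ≠ 0 ∧ ∀ w : InfinitePlace K, w a < f w := by
  classical
  refine exists_ne_zero_mem_ringOfIntegers_lt K ?_
  rw [minkowskiBound, volume_fundamentalDomain_fractionalIdealLatticeBasis, Units.val_one,
    FractionalIdeal.absNorm_one, Rat.cast_one, ENNReal.ofReal_one, one_mul,
    mixedEmbedding.finrank, volume_fundamentalDomain_latticeBasis, convexBodyLT_volume,
    convexBodyLTFactor, IsTotallyReal.nrComplexPlaces_eq_zero, ← IsTotallyReal.finrank]
  simp only [IsTotallyReal.mult_eq, pow_one, pow_zero, one_mul, mul_one]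
  norm_cast
  rw [mul_comm]
  gcongr

theorem exists_ne_zero_sq_lt_of_abs_discr_lt {x : K}
    (h : |(discr K : ℚ)| < |Algebra.norm ℚ x|) :
    ∃ a : 𝓞 K, a ≠ 0 ∧ ∀ w : InfinitePlace K, w a ^ 2 < w x := by
  let g : InfinitePlace K → ℝ≥0 := fun w ↦ ⟨w x, apply_nonneg w x⟩
  have hg : ‖discr K‖₊ < ∏ w, g w := by
    have hprod := prod_eq_abs_norm x
    simp only [IsTotallyReal.mult_eq, pow_one] at hprod
    rw [← NNReal.coe_lt_coe, NNReal.coe_prod, coe_nnnorm, Int.norm_eq_abs]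
    change |(discr K : ℝ)| < ∏ w : InfinitePlace K, w x
    rw [hprod]
    exact_mod_cast h
  have hsqrt : NNReal.sqrt ‖discr K‖₊ < ∏ w, NNReal.sqrt (g w) :=
    calc _ < NNReal.sqrt (∏ w, g w) := NNReal.sqrt_lt_sqrt.mpr hg
      _ = ∏ w, NNReal.sqrt (g w) := map_prod NNReal.sqrtHom g _
  obtain ⟨a, ha, hlt⟩ := exists_ne_zero_lt_of_sqrt_discr_lt hsqrt
  refine ⟨a, ha, fun w ↦ ?_⟩
  calc w a ^ 2 < (NNReal.sqrt (g w) : ℝ) ^ 2 := by gcongr; exact hlt w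
    _ = w x := by rw [← NNReal.coe_pow, NNReal.sq_sqrt]; rfl

end NumberField

theorem TotallyPositive.exists_ne_zero_sub_sq {K : Type} [Field K] [NumberField K]
    [IsTotallyReal K] {α : K} (hα : TotallyPositive α) (h : (discr K : ℚ) < Algebra.norm ℚ α) :
    ∃ β : 𝓞 K, β ≠ 0 ∧ TotallyPositive (α - (β : K) ^ 2) := by
  have habs : |(discr K : ℚ)| < |Algebra.norm ℚ α| := by
    rw [abs_of_pos (by exact_mod_cast discr_pos_of_isTotallyReal K)]
    exact h.trans_le (le_abs_self _)
  obtain ⟨β, hβ, hlt⟩ := exists_ne_zero_sq_lt_of_abs_discr_lt habs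
  refine ⟨β, hβ, fun σ ↦ ?_⟩
  have hσ := hlt (mk (Complex.ofRealHom.comp σ))
  rw [mk_ofRealHom_comp_apply, mk_ofRealHom_comp_apply, sq_abs, abs_of_pos (hα σ)] at hσ
  rw [map_sub, map_pow]
  exact sub_pos.mpr hσ

/-- For every totally positive `α ∈ 𝓞 K` with `N(α) > Δ` there is `β ∈ 𝓞 K` with
`α - β ^ 2` totally positive; in particular every indecomposable element of `𝓞 K⁺`
has norm at most `Δ`. -/
theorem indecomposable_norm_bound (K : Type) [Field K] [NumberField K]
    (hK : IsTotallyRealField K) :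
    (∀ α : 𝓞 K, TotallyPositive (α : K) →
      (NumberField.discr K : ℚ) < Algebra.norm ℚ (α : K) →
      ∃ β : 𝓞 K, TotallyPositive ((α : K) - (β : K) ^ 2)) ∧
    (∀ α : 𝓞 K, TotallyPositive (α : K) →
      (¬ ∃ β : 𝓞 K, TotallyPositive (β : K) ∧ TotallyPositive ((α : K) - (β : K))) →
      Algebra.norm ℚ (α : K) ≤ (NumberField.discr K : ℚ)) := by
  have := hK.isTotallyReal
  refine ⟨fun α hα h ↦ ?_, fun α hα hindec ↦ ?_⟩
  · obtain ⟨β, -, hβ⟩ := hα.exists_ne_zero_sub_sq h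
    exact ⟨β, hβ⟩
  · by_contra! h
    obtain ⟨β, hβ0, hβ⟩ := hα.exists_ne_zero_sub_sq h
    refine hindec ⟨β ^ 2, ?_, ?_⟩
    · exact_mod_cast totallyPositive_sq_of_ne_zero (RingOfIntegers.coe_ne_zero_iff.mpr hβ0)
    · exact_mod_cast hβ
end

section
/- For every d ≥ 1 there exists a constant C > 0, depending only on d, such that for every number field K of degree d over ℚ and every real number X ≥ 2, the number of nonzero ideals of O_K of absolute norm at most X is at most C·X·(log X)^{d−1}. -/
/-!
Label the primes above each rational prime `p` injectively by `Fin d`: this is possible because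
their norms are powers of `p`, at least `p`, and their product divides `N(p) = p ^ d`. Grouping
the prime factorisation of `I` by label gives a `d`-tuple of positive integers with product
`N(I)`, and the tuple determines `I`, since primes with the same label have coprime norms. So the
count is at most the number of `d`-tuples with product `≤ X`, which by induction on `d`
(summing over the first entry and using `∑_{m ≤ X} 1/m ≤ 1 + log X`) is at most
`X (1 + log X) ^ (d - 1)`.
-/

open Finset Real NumberField Ideal UniqueFactorizationMonoid Module

def boundedProdTuples (d N : ℕ) : Finset (Fin d → ℕ) :=
  {v ∈ Fintype.piFinset fun _ ↦ Icc 1 N | ∏ i, v i ≤ N}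

theorem mem_boundedProdTuples {d N : ℕ} {v : Fin d → ℕ} :
    v ∈ boundedProdTuples d N ↔ (∀ i, 0 < v i) ∧ ∏ i, v i ≤ N := by
  simp only [boundedProdTuples, mem_filter, Fintype.mem_piFinset, mem_Icc]
  refine ⟨fun ⟨hv, hN⟩ ↦ ⟨fun i ↦ (hv i).1, hN⟩, fun ⟨hv, hN⟩ ↦ ⟨fun i ↦ ⟨hv i, ?_⟩, hN⟩⟩
  have hprod : ∏ i, v i ≠ 0 := prod_ne_zero_iff.mpr fun i _ ↦ (hv i).ne'
  exact (Nat.le_of_dvd (Nat.pos_of_ne_zero hprod) (dvd_prod_of_mem v (mem_univ i))).trans hN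

theorem card_boundedProdTuples_succ_le (d N : ℕ) :
    #(boundedProdTuples (d + 1) N) ≤ ∑ m ∈ Icc 1 N, #(boundedProdTuples d (N / m)) := by
  rw [card_eq_sum_card_fiberwise (f := fun v ↦ v 0) (t := Icc 1 N)]
  · refine sum_le_sum fun m hm ↦ card_le_card_of_injOn Fin.tail ?_ ?_
    · intro v hv
      simp only [coe_filter, Set.mem_ofPred_eq, mem_boundedProdTuples] at hv
      obtain ⟨⟨hpos, hprod⟩, rfl⟩ := hv
      rw [Fin.prod_univ_succ, mul_comm] at hprod
      rw [mem_coe, mem_boundedProdTuples]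
      exact ⟨fun i ↦ hpos i.succ, (Nat.le_div_iff_mul_le (hpos 0)).mpr hprod⟩
    · intro v hv w hw hvw
      simp only [coe_filter, Set.mem_ofPred_eq] at hv hw
      rw [← Fin.cons_self_tail v, ← Fin.cons_self_tail w, hv.2, hw.2, hvw]
  · exact fun v hv ↦ Fintype.mem_piFinset.mp (mem_filter.mp hv).1 0

theorem sum_Icc_inv_le_one_add_log (N : ℕ) : ∑ m ∈ Icc 1 N, (m : ℝ)⁻¹ ≤ 1 + log N := by
  simpa [harmonic_eq_sum_Icc] using harmonic_le_one_add_log N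

theorem card_boundedProdTuples_le (e N : ℕ) :
    (#(boundedProdTuples (e + 1) N) : ℝ) ≤ N * (1 + log N) ^ e := by
  induction e generalizing N with
  | zero =>
    have := (card_boundedProdTuples_succ_le 0 N).trans
      (sum_le_sum fun m _ ↦ card_le_one_of_subsingleton (boundedProdTuples 0 (N / m)))
    simpa using this
  | succ e ih =>
    have hterm : ∀ m ∈ Icc 1 N,
        (#(boundedProdTuples (e + 1) (N / m)) : ℝ) ≤ N * (1 + log N) ^ e * (m : ℝ)⁻¹ := by
      intro m hm
      obtain ⟨hm1, hmN⟩ := mem_Icc.mp hm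
      have hdiv : 0 < N / m := Nat.div_pos hmN hm1
      calc (#(boundedProdTuples (e + 1) (N / m)) : ℝ)
          ≤ ((N / m : ℕ) : ℝ) * (1 + log (N / m : ℕ)) ^ e := ih _
        _ ≤ (N / m : ℝ) * (1 + log N) ^ e := by
          gcongr ?_ * (1 + log ?_) ^ e
          · exact Nat.cast_div_le
          · exact_mod_cast Nat.div_le_self N m
        _ = N * (1 + log N) ^ e * (m : ℝ)⁻¹ := by ring
    calc (#(boundedProdTuples (e + 1 + 1) N) : ℝ)
        ≤ ∑ m ∈ Icc 1 N, (#(boundedProdTuples (e + 1) (N / m)) : ℝ) := by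
          exact_mod_cast card_boundedProdTuples_succ_le (e + 1) N
      _ ≤ ∑ m ∈ Icc 1 N, N * (1 + log N) ^ e * (m : ℝ)⁻¹ := sum_le_sum hterm
      _ = N * (1 + log N) ^ e * ∑ m ∈ Icc 1 N, (m : ℝ)⁻¹ := by rw [mul_sum]
      _ ≤ N * (1 + log N) ^ e * (1 + log N) := by gcongr; exact sum_Icc_inv_le_one_add_log N
      _ = N * (1 + log N) ^ (e + 1) := by ring

theorem Multiset.prod_fiberwise {ι κ M : Type*} [CommMonoid M] [Fintype κ]
    [DecidableEq κ] (g : ι → κ) (f : ι → M) (m : Multiset ι) :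
    ∏ k, ((m.filter (g · = k)).map f).prod = (m.map f).prod := by
  induction m using Multiset.induction_on with
  | empty => simp
  | cons a m ih =>
    have hcons : ∀ k, (((a ::ₘ m).filter (g · = k)).map f).prod =
        (if g a = k then f a else 1) * ((m.filter (g · = k)).map f).prod := fun k ↦ by
      by_cases h : g a = k <;> simp [h]
    simp only [hcons, Finset.prod_mul_distrib, Finset.prod_ite_eq, Finset.mem_univ, if_true, ih,
      Multiset.map_cons, Multiset.prod_cons]

namespace Ideal

variable {S : Type*} [CommRing S] [IsDedekindDomain S] [Module.Free ℤ S]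

noncomputable def fiberNorms {d : ℕ} (idx : Ideal S → Fin d) (I : Ideal S) (i : Fin d) : ℕ :=
  (((normalizedFactors I).filter (idx · = i)).map absNorm).prod

theorem prod_fiberNorms {d : ℕ} (idx : Ideal S → Fin d) {I : Ideal S} (hI : I ≠ ⊥) :
    ∏ i, fiberNorms idx I i = absNorm I := by
  simp only [fiberNorms]
  rw [Multiset.prod_fiberwise, ← map_multiset_prod, prod_normalizedFactors_eq_self hI]

variable [Module.Finite ℤ S]

theorem absNorm_dvd_pow_finrank_of_natCast_mem {I : Ideal S} {n : ℕ} (h : (n : S) ∈ I) :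
    absNorm I ∣ n ^ finrank ℤ S := by
  rw [← absNorm_span_natCast]
  exact absNorm_dvd_absNorm_of_le ((span_singleton_le_iff_mem _).mpr h)

theorem ne_bot_of_natCast_mem {I : Ideal S} {n : ℕ} (hn : n ≠ 0) (h : (n : S) ∈ I) : I ≠ ⊥ := by
  rintro rfl
  have := absNorm_dvd_pow_finrank_of_natCast_mem h
  rw [absNorm_bot, zero_dvd_iff] at this
  exact pow_ne_zero _ hn this

theorem exists_absNorm_eq_pow_of_natCast_mem {P : Ideal S} [hP : P.IsPrime] {p : ℕ}
    (hp : p.Prime) (h : (p : S) ∈ P) : ∃ j, 0 < j ∧ absNorm P = p ^ j := by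
  obtain ⟨j, -, hj⟩ := (Nat.dvd_prime_pow hp).mp (absNorm_dvd_pow_finrank_of_natCast_mem h)
  refine ⟨j, Nat.pos_of_ne_zero ?_, hj⟩
  rintro rfl
  exact hP.ne_top (absNorm_eq_one_iff.mp hj)

theorem natCast_mem_of_dvd_absNorm {P : Ideal S} [P.IsMaximal] {p : ℕ} (hp : p.Prime)
    (h : p ∣ absNorm P) : (p : S) ∈ P := by
  obtain ⟨q, n, -, hqP, hq, hPq⟩ := exists_prime_and_absNorm_eq_pow P
  rw [hPq] at h
  rwa [(Nat.prime_dvd_prime_iff_eq hp hq).mp (hp.dvd_of_dvd_pow h)]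

theorem encard_setOf_isPrime_natCast_mem_le {p : ℕ} (hp : p.Prime) :
    {P : Ideal S | P.IsPrime ∧ (p : S) ∈ P}.encard ≤ finrank ℤ S := by
  have : IsAddTorsionFree S := .of_isTorsionFree ℤ _
  have := CharZero.of_isAddTorsionFree S S
  set T := {P : Ideal S | P.IsPrime ∧ (p : S) ∈ P}
  have hfin : T.Finite := (finite_setOfPred_absNorm_le (p ^ finrank ℤ S)).subset fun P hP ↦
    Nat.le_of_dvd (pow_pos hp.pos _) (absNorm_dvd_pow_finrank_of_natCast_mem hP.2)
  rw [hfin.encard_eq_coe_toFinset_card, Nat.cast_le]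
  set s := hfin.toFinset
  have hs : ∀ P ∈ s, P.IsPrime ∧ (p : S) ∈ P := fun P hP ↦ hfin.mem_toFinset.mp hP
  have hprime : ∀ P ∈ s, Prime P := fun P hP ↦
    prime_of_isPrime (ne_bot_of_natCast_mem hp.ne_zero (hs P hP).2) (hs P hP).1
  have hdvd : ∏ P ∈ s, absNorm P ∣ p ^ finrank ℤ S := by
    rw [← map_prod, ← absNorm_span_natCast]
    refine map_dvd absNorm (Finset.prod_primes_dvd _ hprime fun P hP ↦ ?_)
    rw [dvd_iff_le, span_singleton_le_iff_mem]
    exact (hs P hP).2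
  have hle : p ^ s.card ≤ ∏ P ∈ s, absNorm P := by
    rw [← Finset.prod_const]
    refine Finset.prod_le_prod' fun P hP ↦ ?_
    have := (hs P hP).1
    obtain ⟨j, hj, hPj⟩ := exists_absNorm_eq_pow_of_natCast_mem hp (hs P hP).2
    exact hPj ▸ Nat.le_self_pow hj.ne' p
  exact (Nat.pow_le_pow_iff_right hp.one_lt).mp (hle.trans (Nat.le_of_dvd (pow_pos hp.pos _) hdvd))

theorem exists_injOn_setOf_isPrime_natCast_mem :
    ∃ idx : Ideal S → Fin (finrank ℤ S),
      ∀ p : ℕ, p.Prime → Set.InjOn idx {P | P.IsPrime ∧ (p : S) ∈ P} := by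
  have : Nonempty (Fin (finrank ℤ S)) := ⟨⟨0, finrank_pos⟩⟩
  have hf : ∀ p : ℕ, ∃ f : Ideal S → Fin (finrank ℤ S),
      p.Prime → Set.InjOn f {P | P.IsPrime ∧ (p : S) ∈ P} := by
    intro p
    by_cases hp : p.Prime
    · have hle := encard_setOf_isPrime_natCast_mem_le (S := S) hp
      obtain ⟨f, -, hf⟩ := (Set.finite_of_encard_le_coe hle).exists_injOn_of_encard_le
        (t := (Set.univ : Set (Fin (finrank ℤ S)))) (by simpa using hle)
      exact ⟨f, fun _ ↦ hf⟩
    · exact ⟨fun _ ↦ Classical.arbitrary _, fun hp' ↦ absurd hp' hp⟩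
  choose f hf using hf
  have hminFac : ∀ {p : ℕ}, p.Prime → ∀ P ∈ {P : Ideal S | P.IsPrime ∧ (p : S) ∈ P},
      (absNorm P).minFac = p := by
    rintro p hp P ⟨hP, hpP⟩
    obtain ⟨j, hj, hPj⟩ := exists_absNorm_eq_pow_of_natCast_mem hp hpP
    rw [hPj, hp.pow_minFac hj.ne']
  refine ⟨fun P ↦ f (absNorm P).minFac P, fun p hp P hP Q hQ hPQ ↦ ?_⟩
  simp only [hminFac hp P hP, hminFac hp Q hQ] at hPQ
  exact hf p hp hP hQ hPQ

theorem factorization_prod_map_absNorm {T : Set (Ideal S)} (hprime : ∀ P ∈ T, Prime P)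
    (hover : ∀ p : ℕ, p.Prime → {P ∈ T | (p : S) ∈ P}.Subsingleton)
    {m : Multiset (Ideal S)} (hm : ∀ Q ∈ m, Q ∈ T) {P : Ideal S} (hP : P ∈ T) {p : ℕ}
    (hp : p.Prime) (hpP : (p : S) ∈ P) :
    (m.map absNorm).prod.factorization p = m.count P * (absNorm P).factorization p := by
  have hne : ∀ R ∈ T, absNorm R ≠ 0 := fun R hR ↦
    absNorm_eq_zero_iff.not.mpr (hprime R hR).ne_zero
  induction m using Multiset.induction_on with
  | empty => simp
  | cons Q m ih =>
    have hQ := hm Q (Multiset.mem_cons_self Q m)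
    have hprod : (m.map absNorm).prod ≠ 0 := Multiset.prod_ne_zero fun h0 ↦ by
      obtain ⟨R, hR, hR0⟩ := Multiset.mem_map.mp h0
      exact hne R (hm R (Multiset.mem_cons_of_mem hR)) hR0
    rw [Multiset.map_cons, Multiset.prod_cons, Nat.factorization_mul (hne Q hQ) hprod,
      Finsupp.add_apply, ih fun R hR ↦ hm R (Multiset.mem_cons_of_mem hR), Multiset.count_cons]
    by_cases hQP : Q = P
    · rw [hQP, if_pos rfl]; ring
    · have : (absNorm Q).factorization p = 0 := by
        refine Nat.factorization_eq_zero_of_not_dvd fun hdvd ↦ hQP ?_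
        have := ((isPrime_of_prime (hprime Q hQ)).isMaximal (hprime Q hQ).ne_zero)
        exact hover p hp ⟨hQ, natCast_mem_of_dvd_absNorm hp hdvd⟩ ⟨hP, hpP⟩
      rw [this, if_neg (Ne.symm hQP), zero_add, add_zero]

theorem eq_of_prod_map_absNorm_eq {T : Set (Ideal S)} (hprime : ∀ P ∈ T, Prime P)
    (hover : ∀ p : ℕ, p.Prime → {P ∈ T | (p : S) ∈ P}.Subsingleton)
    {m₁ m₂ : Multiset (Ideal S)} (hm₁ : ∀ Q ∈ m₁, Q ∈ T) (hm₂ : ∀ Q ∈ m₂, Q ∈ T)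
    (h : (m₁.map absNorm).prod = (m₂.map absNorm).prod) : m₁ = m₂ := by
  ext P
  by_cases hP : P ∈ T
  · have := (isPrime_of_prime (hprime P hP)).isMaximal (hprime P hP).ne_zero
    obtain ⟨p, n, hn, hpP, hp, hPn⟩ := exists_prime_and_absNorm_eq_pow P
    have hfac := congrArg (·.factorization p) h
    simp only [factorization_prod_map_absNorm hprime hover hm₁ hP hp hpP,
      factorization_prod_map_absNorm hprime hover hm₂ hP hp hpP, hPn, hp.factorization_pow,
      Finsupp.single_eq_same] at hfac
    exact Nat.eq_of_mul_eq_mul_right hn hfac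
  · rw [Multiset.count_eq_zero.mpr fun h ↦ hP (hm₁ P h),
      Multiset.count_eq_zero.mpr fun h ↦ hP (hm₂ P h)]

theorem fiberNorms_pos {d : ℕ} (idx : Ideal S → Fin d) (I : Ideal S) (i : Fin d) :
    0 < fiberNorms idx I i := by
  refine Nat.pos_of_ne_zero (Multiset.prod_ne_zero fun h0 ↦ ?_)
  obtain ⟨P, hP, hP0⟩ := Multiset.mem_map.mp h0
  exact (prime_of_normalized_factor P (Multiset.mem_of_mem_filter hP)).ne_zero
    (absNorm_eq_zero_iff.mp hP0)

theorem injOn_fiberNorms {d : ℕ} {idx : Ideal S → Fin d}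
    (hidx : ∀ p : ℕ, p.Prime → Set.InjOn idx {P | P.IsPrime ∧ (p : S) ∈ P}) :
    Set.InjOn (fiberNorms idx) {I | I ≠ ⊥} := by
  intro I hI J hJ h
  have hfiber : ∀ i, (normalizedFactors I).filter (idx · = i) =
      (normalizedFactors J).filter (idx · = i) := by
    intro i
    refine eq_of_prod_map_absNorm_eq (T := {P | Prime P ∧ idx P = i}) (fun P hP ↦ hP.1)
      (fun p hp P hP Q hQ ↦ hidx p hp ⟨isPrime_of_prime hP.1.1, hP.2⟩
        ⟨isPrime_of_prime hQ.1.1, hQ.2⟩ (hP.1.2.trans hQ.1.2.symm)) ?_ ?_ (congrFun h i)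
    all_goals exact fun P hP ↦ ⟨prime_of_normalized_factor P (Multiset.mem_of_mem_filter hP),
      (Multiset.mem_filter.mp hP).2⟩
  have hfactors : normalizedFactors I = normalizedFactors J := by
    ext P
    rw [← Multiset.count_filter_of_pos (p := (idx · = idx P)) rfl, hfiber,
      Multiset.count_filter_of_pos (p := (idx · = idx P)) rfl]
  rw [← prod_normalizedFactors_eq_self hI, hfactors, prod_normalizedFactors_eq_self hJ]

theorem card_absNorm_le_le_card_boundedProdTuples (X : ℝ) :
    Nat.card {I : Ideal S // I ≠ ⊥ ∧ (absNorm I : ℝ) ≤ X} ≤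
      #(boundedProdTuples (finrank ℤ S) ⌊X⌋₊) := by
  obtain ⟨idx, hidx⟩ := exists_injOn_setOf_isPrime_natCast_mem (S := S)
  have hmem : ∀ I : {I : Ideal S // I ≠ ⊥ ∧ (absNorm I : ℝ) ≤ X},
      fiberNorms idx I ∈ boundedProdTuples (finrank ℤ S) ⌊X⌋₊ := fun I ↦
    mem_boundedProdTuples.mpr ⟨fiberNorms_pos idx I, (prod_fiberNorms idx I.2.1).trans_le
      (Nat.le_floor I.2.2)⟩
  rw [← Nat.card_eq_finsetCard]
  exact Nat.card_le_card_of_injective (fun I ↦ ⟨fiberNorms idx I, hmem I⟩)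
    fun I J h ↦ Subtype.ext (injOn_fiberNorms hidx I.2.1 J.2.1 (congrArg Subtype.val h))

end Ideal

theorem one_add_log_le_mul_log {X : ℝ} (hX : 2 ≤ X) : 1 + log X ≤ (1 + (log 2)⁻¹) * log X := by
  have hlog2 : 0 < log 2 := log_pos one_lt_two
  have h : log 2 ≤ log X := log_le_log two_pos hX
  have : 1 ≤ (log 2)⁻¹ * log X := by rwa [inv_mul_eq_div, one_le_div hlog2]
  linarith

/-- For every degree `d ≥ 1` there is a constant `C > 0` such that every number field of
degree `d` has at most `C · X · (log X)^(d-1)` nonzero ideals of absolute norm at most `X`. -/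
theorem ideal_count_bound (d : ℕ) (hd : 1 ≤ d) :
    ∃ C : ℝ, 0 < C ∧
      ∀ (K : Type) [Field K] [NumberField K], Module.finrank ℚ K = d →
        ∀ X : ℝ, 2 ≤ X →
          (Nat.card {I : Ideal (𝓞 K) // I ≠ ⊥ ∧ (Ideal.absNorm I : ℝ) ≤ X} : ℝ) ≤
            C * X * Real.log X ^ (d - 1) := by
  obtain ⟨e, rfl⟩ : ∃ e, d = e + 1 := ⟨d - 1, by omega⟩
  refine ⟨(1 + (log 2)⁻¹) ^ e, by positivity, fun K _ _ hK X hX ↦ ?_⟩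
  have hrank : finrank ℤ (𝓞 K) = e + 1 := by rw [RingOfIntegers.rank, hK]
  have hfloor : 0 < ⌊X⌋₊ := Nat.floor_pos.mpr (by linarith)
  calc (Nat.card {I : Ideal (𝓞 K) // I ≠ ⊥ ∧ (absNorm I : ℝ) ≤ X} : ℝ)
      ≤ #(boundedProdTuples (e + 1) ⌊X⌋₊) := by
        exact_mod_cast hrank ▸ card_absNorm_le_le_card_boundedProdTuples X
    _ ≤ ⌊X⌋₊ * (1 + log ⌊X⌋₊) ^ e := card_boundedProdTuples_le e _
    _ ≤ X * (1 + log X) ^ e := by gcongr <;> exact Nat.floor_le (by linarith)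
    _ ≤ X * ((1 + (log 2)⁻¹) * log X) ^ e := by
        gcongr
        · linarith [log_nonneg (by linarith : (1 : ℝ) ≤ X)]
        · exact one_add_log_le_mul_log hX
    _ = (1 + (log 2)⁻¹) ^ e * X * log X ^ (e + 1 - 1) := by rw [Nat.add_sub_cancel, mul_pow]; ring
end

section
/- Let K be a number field of degree d over ℚ and let n be a positive integer. Then the number of nonzero ideals of O_K of absolute norm equal to n is at most the number of d-tuples (n₁, …, n_d) of positive integers with n₁·n₂·⋯·n_d = n. -/
/-!
Over each rational prime `p` there are at most `d` prime ideals of `𝓞 K`, because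
`∑ e_P f_P = d`; so the primes can be labelled by slots `1, …, d`, injectively within each
residue characteristic. Send `I = ∏ P ^ v_P` to the tuple whose `i`-th entry is the product of the
`N(P) ^ v_P` with `P` in slot `i`; its entries multiply to `N(I)`. Since `N(P) = p ^ f_P`, the
`p`-adic valuation of the entry in the slot of `P` is `f_P v_P`, so the tuple determines every
`v_P`, hence `I`.
-/

section SlotProd

variable {α ι : Type*} [DecidableEq ι]

def slotProd (s : α → ι) (g : α → ℕ) (m : Multiset α) : ι → ℕ :=
  (m.map fun a => Pi.mulSingle (s a) (g a)).prod

variable (s : α → ι) (g : α → ℕ)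

@[simp]
lemma slotProd_zero : slotProd s g 0 = 1 := rfl

@[simp]
lemma slotProd_cons (a : α) (m : Multiset α) :
    slotProd s g (a ::ₘ m) = Pi.mulSingle (s a) (g a) * slotProd s g m := by
  simp [slotProd]

lemma prod_slotProd [Fintype ι] (m : Multiset α) : ∏ i, slotProd s g m i = (m.map g).prod := by
  induction m using Multiset.induction_on with
  | empty => simp
  | cons a m ih => simp [Finset.prod_mul_distrib, ih]

lemma slotProd_ne_zero {m : Multiset α} (hm : ∀ a ∈ m, g a ≠ 0) (i : ι) :
    slotProd s g m i ≠ 0 := by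
  induction m using Multiset.induction_on with
  | empty => simp
  | cons a m ih =>
    rw [Multiset.forall_mem_cons] at hm
    simp only [slotProd_cons, Pi.mul_apply]
    refine mul_ne_zero ?_ (ih hm.2)
    rcases eq_or_ne i (s a) with rfl | h
    · simpa using hm.1
    · simp [h]

variable {s g} {k : α → ℕ} {S : Set α}

lemma factorization_slotProd_apply [DecidableEq α] (hsk : Set.InjOn (fun a => (s a, k a)) S)
    (hg : ∀ a ∈ S, (g a).primeFactors = {k a}) {m : Multiset α} (hm : ∀ b ∈ m, b ∈ S)
    {a : α} (ha : a ∈ S) :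
    (slotProd s g m (s a)).factorization (k a) = m.count a * (g a).factorization (k a) := by
  have hg0 : ∀ b ∈ S, g b ≠ 0 := fun b hb h => by simpa [h] using hg b hb
  induction m using Multiset.induction_on with
  | empty => simp
  | cons b m ih =>
    rw [Multiset.forall_mem_cons] at hm
    have hb : (Pi.mulSingle (s b) (g b) : ι → ℕ) (s a) ≠ 0 := by
      rcases eq_or_ne (s a) (s b) with h | h
      · simpa [h] using hg0 b hm.1
      · simp [h]
    rw [slotProd_cons, Pi.mul_apply, Finsupp.ext_iff.1 (Nat.factorization_mul hb
      (slotProd_ne_zero s g (fun c hc => hg0 c (hm.2 c hc)) _)), Finsupp.add_apply, ih hm.2]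
    rcases eq_or_ne b a with rfl | hba
    · simp [add_mul, add_comm]
    rw [Multiset.count_cons_of_ne hba.symm, add_eq_right]
    rcases eq_or_ne (s a) (s b) with hs | hs
    · have hk : k a ≠ k b := fun hk => hba (hsk hm.1 ha (Prod.ext hs.symm hk.symm))
      rw [hs, Pi.mulSingle_eq_same, ← Finsupp.notMem_support_iff, Nat.support_factorization,
        hg b hm.1]
      simpa using hk
    · simp [hs]

lemma slotProd_injOn (hsk : Set.InjOn (fun a => (s a, k a)) S)
    (hg : ∀ a ∈ S, (g a).primeFactors = {k a}) :
    Set.InjOn (slotProd s g) {m | ∀ a ∈ m, a ∈ S} := by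
  classical
  intro m hm m' hm' h
  refine Multiset.ext.2 fun a => ?_
  by_cases ha : a ∈ S
  · have hpos : (g a).factorization (k a) ≠ 0 := Finsupp.mem_support_iff.1 <| by
      rw [Nat.support_factorization, hg a ha]; exact Finset.mem_singleton_self _
    have := factorization_slotProd_apply hsk hg hm ha
    rw [h, factorization_slotProd_apply hsk hg hm' ha] at this
    exact (Nat.eq_of_mul_eq_mul_right (Nat.pos_of_ne_zero hpos) this).symm
  · rw [Multiset.count_eq_zero_of_notMem (fun h => ha (hm a h)),
      Multiset.count_eq_zero_of_notMem (fun h => ha (hm' a h))]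

end SlotProd

lemma exists_injOn_prod_of_encard_fiber_le {α β ι : Type*} [Finite ι] [Nonempty ι] (k : α → β)
    (S : Set α) (h : ∀ b, (S ∩ k ⁻¹' {b}).encard ≤ ENat.card ι) :
    ∃ s : α → ι, Set.InjOn (fun a => (s a, k a)) S := by
  have hfiber (b : β) : ∃ t : α → ι, Set.InjOn t (S ∩ k ⁻¹' {b}) := by
    have hfin : (S ∩ k ⁻¹' {b}).Finite :=
      Set.encard_lt_top_iff.1 ((h b).trans_lt ENat.card_lt_top_of_finite)
    obtain ⟨t, -, ht⟩ := hfin.exists_injOn_of_encard_le ((Set.encard_univ ι).symm ▸ h b)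
    exact ⟨t, ht⟩
  choose t ht using hfiber
  refine ⟨fun a => t (k a) a, fun a ha a' ha' hs => ?_⟩
  obtain ⟨hta, hka⟩ := Prod.mk.inj hs
  simp only [hka] at hta
  exact ht (k a') ⟨ha, hka⟩ ⟨ha', rfl⟩ hta

theorem Ideal.encard_primesOver_le_finrank {R S : Type*} [CommRing R] [IsDomain R] [CommRing S]
    [Algebra R S] [Module.Finite R S] [Module.Flat R S] (p : Ideal R) [p.IsPrime] :
    (p.primesOver S).encard ≤ Module.finrank R S := by
  have := (Algebra.QuasiFinite.finite_primesOver (S := S) p).fintype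
  rw [Set.encard_eq_coe_toFinset_card, Set.toFinset_card,
    ← Ideal.sum_ramification_inertia_eq_finrank p S, Fintype.card_eq_sum_ones, Nat.cast_le]
  exact Finset.sum_le_sum fun q _ => Nat.one_le_iff_ne_zero.2 <|
    Nat.mul_ne_zero (Ideal.ramificationIdx_pos q.1 R).ne' (Ideal.inertiaDeg_pos q.1 R).ne'

lemma Nat.finite_posTuples_prod_eq (d n : ℕ) :
    Finite {f : Fin d → ℕ // (∀ i, 0 < f i) ∧ ∏ i, f i = n} :=
  Finite.of_injective
    (fun f => (⟨f.1, Nat.mem_finMulAntidiag.2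
      ⟨f.2.2, f.2.2 ▸ (Finset.prod_pos fun i _ => f.2.1 i).ne'⟩⟩ : Nat.finMulAntidiag d n))
    fun _ _ h => Subtype.ext (Subtype.mk.inj h)

namespace Ideal

open UniqueFactorizationMonoid

variable {R : Type*} [CommRing R] [IsDedekindDomain R] [Module.Free ℤ R] [Module.Finite ℤ R]

lemma primeFactors_absNorm_of_prime {P : Ideal R} (hP : Prime P) :
    (absNorm P).primeFactors = {absNorm (P.under ℤ)} := by
  have hPprime : P.IsPrime := isPrime_of_prime hP
  have : NeZero P := ⟨hP.ne_zero⟩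
  have hp := Nat.absNorm_under_prime P
  have hnorm := absNorm_eq_pow_inertiaDeg' P hp
  rw [hnorm, Nat.primeFactors_prime_pow _ hp]
  intro h0
  rw [h0, pow_zero, absNorm_eq_one_iff] at hnorm
  exact hPprime.ne_top hnorm

lemma encard_prime_absNorm_under_eq_le (b : ℕ) :
    ({P : Ideal R | Prime P} ∩ (fun P => absNorm (P.under ℤ)) ⁻¹' {b}).encard ≤
      Module.finrank ℤ R := by
  rcases Set.eq_empty_or_nonempty
    ({P : Ideal R | Prime P} ∩ (fun P => absNorm (P.under ℤ)) ⁻¹' {b}) with h | ⟨P₀, hP₀, rfl⟩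
  · simp [h]
  have : P₀.IsPrime := isPrime_of_prime hP₀
  refine (Set.encard_le_encard ?_).trans (encard_primesOver_le_finrank (P₀.under ℤ))
  rintro P ⟨hP, hPb⟩
  exact ⟨isPrime_of_prime hP, ⟨Function.LeftInverse.injective (g := fun m : ℕ => span {(m : ℤ)})
    Int.ideal_span_absNorm_eq_self hPb.symm⟩⟩

theorem card_absNorm_eq_le_card_posTuples (n : ℕ) :
    Nat.card {I : Ideal R // I ≠ ⊥ ∧ absNorm I = n} ≤
      Nat.card {f : Fin (Module.finrank ℤ R) → ℕ // (∀ i, 0 < f i) ∧ ∏ i, f i = n} := by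
  have : NeZero (Module.finrank ℤ R) := ⟨Module.finrank_pos.ne'⟩
  obtain ⟨s, hs⟩ := exists_injOn_prod_of_encard_fiber_le (ι := Fin (Module.finrank ℤ R))
    (fun P : Ideal R => absNorm (P.under ℤ)) {P | Prime P}
    (by simpa using encard_prime_absNorm_under_eq_le (R := R))
  have hfactors (I : Ideal R) : ∀ P ∈ normalizedFactors I, P ∈ {P | Prime P} :=
    fun P hP => prime_of_normalized_factor P hP
  have hpos (I : Ideal R) (i) : 0 < slotProd s absNorm (normalizedFactors I) i :=
    Nat.pos_of_ne_zero <| slotProd_ne_zero s absNorm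
      (fun P hP => absNorm_eq_zero_iff.not.2 (hfactors I P hP).ne_zero) i
  have hprod {I : Ideal R} (hI : I ≠ ⊥) :
      ∏ i, slotProd s absNorm (normalizedFactors I) i = absNorm I := by
    rw [prod_slotProd, ← map_multiset_prod, prod_normalizedFactors_eq_self hI]
  have := Nat.finite_posTuples_prod_eq (Module.finrank ℤ R) n
  refine Nat.card_le_card_of_injective (fun I => ⟨slotProd s absNorm (normalizedFactors I.1),
    hpos I.1, (hprod I.2.1).trans I.2.2⟩) ?_
  intro ⟨I, hI, _⟩ ⟨J, hJ, _⟩ hIJ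
  have := slotProd_injOn hs (fun P hP => primeFactors_absNorm_of_prime hP) (hfactors I)
    (hfactors J) (congrArg Subtype.val hIJ)
  rw [Subtype.mk.injEq, ← prod_normalizedFactors_eq_self hI,
    ← prod_normalizedFactors_eq_self hJ, this]

end Ideal

open NumberField

theorem ideal_count_le_tuple_count_general (K : Type) [Field K] [NumberField K]
    (d : ℕ) (hd : Module.finrank ℚ K = d) (n : ℕ) :
    Nat.card {I : Ideal (𝓞 K) // I ≠ ⊥ ∧ Ideal.absNorm I = n} ≤
      Nat.card {f : Fin d → ℕ // (∀ i, 0 < f i) ∧ ∏ i, f i = n} := by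
  subst hd
  rw [← RingOfIntegers.rank]
  exact Ideal.card_absNorm_eq_le_card_posTuples n

/-- In a number field of degree `d`, the number of nonzero ideals of absolute norm `n` is
at most the number of `d`-tuples of positive integers with product `n`. -/
theorem ideal_count_le_tuple_count (K : Type) [Field K] [NumberField K]
    (d : ℕ) (hd : Module.finrank ℚ K = d) (n : ℕ) (hn : 0 < n) :
    Nat.card {I : Ideal (𝓞 K) // I ≠ ⊥ ∧ Ideal.absNorm I = n} ≤
      Nat.card {f : Fin d → ℕ // (∀ i, 0 < f i) ∧ ∏ i, f i = n} :=
  ideal_count_le_tuple_count_general K d hd n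
end

section
/- Let F be a totally real number field and let Q(x₁, …, x_r) = ∑_{1 ≤ i ≤ j ≤ r} a_{ij} x_i x_j be a quadratic form with coefficients a_{ij} ∈ F that is totally positive definite, i.e., for every embedding σ : F → ℝ the real quadratic form ∑ σ(a_{ij}) x_i x_j is positive definite. Then there exists a constant C > 0, depending only on F and Q (but not on K), such that for every totally real number field K containing F and every vector v = (v₁, …, v_r) ∈ K^r one has (max_j ⌈v_j⌉_K)² ≤ C · ⌈Q(v)⌉_K, where Q(v) is computed in K using the inclusion F ⊆ K. -/
/-!
A real embedding `τ` of `K` restricts to a real embedding `σ` of `F`, and `τ (Q v) = Q_σ (τ ∘ v)`.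
Each `Q_σ` is continuous, homogeneous of degree two and positive off `0`, so by compactness of the
unit sphere `‖x‖² ≤ C_σ · Q_σ x` on `ℝ^r` (sup norm); as `F` has finitely many real embeddings,
one constant `C` serves for all `σ`. Applied to `x = τ ∘ v` this bounds every `|τ (v j)|²` by
`C · ⌈Q v⌉`.
-/

open NumberField

/-- The house of an element of a number field: the maximum of the absolute values of its
images under all real embeddings. -/
noncomputable def realHouse {K : Type} [Field K] (x : K) : ℝ :=
  ⨆ σ : K →+* ℝ, |σ x|

/-- The value at `v` of the quadratic form `∑_{i ≤ j} a i j * x i * x j`. -/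
def quadEval {R : Type} [CommRing R] {r : ℕ} (a : Fin r → Fin r → R) (v : Fin r → R) : R :=
  ∑ p ∈ Finset.univ.filter (fun p : Fin r × Fin r => p.1 ≤ p.2), a p.1 p.2 * v p.1 * v p.2

lemma realHouse_nonneg {K : Type} [Field K] (x : K) : 0 ≤ realHouse x :=
  Real.iSup_nonneg fun _ => abs_nonneg _

lemma abs_le_realHouse {K : Type} [Field K] [Finite (K →+* ℝ)] (x : K) (τ : K →+* ℝ) :
    |τ x| ≤ realHouse x :=
  le_ciSup (Set.finite_range fun τ : K →+* ℝ => |τ x|).bddAbove τ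

lemma sq_iSup_le_of_forall_sq_le {ι : Sort*} {f : ι → ℝ} {B : ℝ} (hf : ∀ i, 0 ≤ f i)
    (h : ∀ i, f i ^ 2 ≤ B) (hB : 0 ≤ B) : (⨆ i, f i) ^ 2 ≤ B := by
  have hsup : ⨆ i, f i ≤ √B :=
    Real.iSup_le (fun i => (Real.le_sqrt (hf i) hB).mpr (h i)) (Real.sqrt_nonneg B)
  exact (Real.le_sqrt (Real.iSup_nonneg hf) hB).mp hsup

lemma map_quadEval {R S : Type} [CommRing R] [CommRing S] (f : R →+* S) {r : ℕ}
    (a : Fin r → Fin r → R) (v : Fin r → R) :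
    f (quadEval a v) = quadEval (fun i j => f (a i j)) (fun i => f (v i)) := by
  simp [quadEval, map_sum]

lemma quadEval_smul {R : Type} [CommRing R] {r : ℕ} (a : Fin r → Fin r → R) (t : R)
    (v : Fin r → R) : quadEval a (t • v) = t ^ 2 * quadEval a v := by
  simp only [quadEval, Finset.mul_sum, Pi.smul_apply, smul_eq_mul]
  exact Finset.sum_congr rfl fun p _ => by ring

lemma continuous_quadEval {r : ℕ} (a : Fin r → Fin r → ℝ) :
    Continuous (quadEval a : (Fin r → ℝ) → ℝ) := by
  unfold quadEval
  fun_prop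

lemma exists_sq_norm_le_mul_of_homogeneous {E : Type*} [NormedAddCommGroup E]
    [NormedSpace ℝ E] [FiniteDimensional ℝ E] {q : E → ℝ} (hcont : Continuous q)
    (hsmul : ∀ (t : ℝ) (x : E), q (t • x) = t ^ 2 * q x) (hpos : ∀ x, x ≠ 0 → 0 < q x) :
    ∃ C : ℝ, 0 < C ∧ ∀ x, ‖x‖ ^ 2 ≤ C * q x := by
  have hq0 : q 0 = 0 := by simpa using hsmul 0 0
  rcases subsingleton_or_nontrivial E with _ | _
  · exact ⟨1, one_pos, fun x => by simp [Subsingleton.elim x 0, hq0]⟩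
  obtain ⟨x₀, hx₀, hmin⟩ := (isCompact_sphere (0 : E) 1).exists_isMinOn
    (NormedSpace.sphere_nonempty.mpr zero_le_one) hcont.continuousOn
  have hx₀ : x₀ ≠ 0 := ne_zero_of_mem_unit_sphere ⟨x₀, hx₀⟩
  have hm : 0 < q x₀ := hpos x₀ hx₀
  refine ⟨(q x₀)⁻¹, inv_pos.mpr hm, fun x => ?_⟩
  rcases eq_or_ne x 0 with rfl | hx
  · simp [hq0]
  have hn : 0 < ‖x‖ := norm_pos_iff.mpr hx
  have hunit : ‖x‖⁻¹ • x ∈ Metric.sphere (0 : E) 1 := by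
    simp [norm_smul, hn.ne']
  have hle : q x₀ ≤ (‖x‖⁻¹) ^ 2 * q x := hsmul _ x ▸ hmin hunit
  rw [inv_mul_eq_div, le_div_iff₀ hm]
  rw [inv_pow, inv_mul_eq_div, le_div_iff₀ (by positivity)] at hle
  linarith

lemma exists_sq_norm_le_mul_forall_of_finite {ι E : Type*} [Finite ι] [NormedAddCommGroup E]
    {q : ι → E → ℝ} (h : ∀ i, ∃ C : ℝ, 0 < C ∧ ∀ x, ‖x‖ ^ 2 ≤ C * q i x) :
    ∃ C : ℝ, 0 < C ∧ ∀ i x, ‖x‖ ^ 2 ≤ C * q i x := by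
  choose c hc_pos hc using h
  obtain ⟨M, hM⟩ := (Set.finite_range c).bddAbove
  refine ⟨max M 1, lt_max_of_lt_right one_pos, fun i x => (hc i x).trans ?_⟩
  have hq : 0 ≤ q i x := nonneg_of_mul_nonneg_right ((sq_nonneg _).trans (hc i x)) (hc_pos i)
  exact mul_le_mul_of_nonneg_right ((hM ⟨i, rfl⟩).trans (le_max_left M 1)) hq

theorem house_sq_le_house_quadEval_general (F : Type) [Field F] [NumberField F]
    (r : ℕ) (a : Fin r → Fin r → F)
    (hQ : ∀ σ : F →+* ℝ, ∀ v : Fin r → ℝ, v ≠ 0 → 0 < quadEval (fun i j => σ (a i j)) v) :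
    ∃ C : ℝ, 0 < C ∧
      ∀ (K : Type) [Field K] [NumberField K] [Algebra F K],
        IsTotallyRealField K →
        ∀ v : Fin r → K,
          (⨆ j, realHouse (v j)) ^ 2 ≤
            C * realHouse (quadEval (fun i j => algebraMap F K (a i j)) v) := by
  obtain ⟨C, hC, hbound⟩ := exists_sq_norm_le_mul_forall_of_finite fun σ : F →+* ℝ =>
    exists_sq_norm_le_mul_of_homogeneous (continuous_quadEval _) (quadEval_smul _) (hQ σ)
  refine ⟨C, hC, fun K _ _ _ _ v => ?_⟩
  set Qv := quadEval (fun i j => algebraMap F K (a i j)) v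
  have hB : 0 ≤ C * realHouse Qv := mul_nonneg hC.le (realHouse_nonneg Qv)
  have hτ (j : Fin r) (τ : K →+* ℝ) : |τ (v j)| ^ 2 ≤ C * realHouse Qv :=
    calc |τ (v j)| ^ 2 ≤ ‖fun i => τ (v i)‖ ^ 2 := by
          gcongr
          exact norm_le_pi_norm (fun i => τ (v i)) j
      _ ≤ C * τ Qv := by
          rw [map_quadEval]
          exact hbound (τ.comp (algebraMap F K)) _
      _ ≤ C * realHouse Qv := by
          gcongr
          exact (le_abs_self _).trans (abs_le_realHouse Qv τ)
  exact sq_iSup_le_of_forall_sq_le (fun j => realHouse_nonneg (v j))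
    (fun j => sq_iSup_le_of_forall_sq_le (fun _ => abs_nonneg _) (hτ j) hB) hB

/-- For a totally positive definite quadratic form `Q = ∑_{i ≤ j} a_{ij} x_i x_j` over a
totally real number field `F`, there is `C > 0` depending only on `F` and `Q` such that for
every totally real number field `K ⊇ F` and every `v ∈ K^r`,
`(max_j realHouse (v j))² ≤ C · realHouse (Q v)`. -/
theorem house_sq_le_house_quadEval (F : Type) [Field F] [NumberField F]
    (hF : IsTotallyRealField F) (r : ℕ) (a : Fin r → Fin r → F)
    (hQ : ∀ σ : F →+* ℝ, ∀ v : Fin r → ℝ, v ≠ 0 → 0 < quadEval (fun i j => σ (a i j)) v) :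
    ∃ C : ℝ, 0 < C ∧
      ∀ (K : Type) [Field K] [NumberField K] [Algebra F K],
        IsTotallyRealField K →
        ∀ v : Fin r → K,
          (⨆ j, realHouse (v j)) ^ 2 ≤
            C * realHouse (quadEval (fun i j => algebraMap F K (a i j)) v) :=
  house_sq_le_house_quadEval_general F r a hQ
end

section
/- For all positive integers m and d, the set of subfields K of a fixed algebraic closure of ℚ such that K is a totally real number field of degree d over ℚ and such that for every α ∈ O_K⁺ the element m·α is a sum of squares of elements of O_K, is finite. -/
/-!
Let `x ∈ 𝓞 K` have all conjugates of absolute value at most `n`. Then `x + n + 1` is totally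
positive, so `m (x + n + 1) = ∑ βᵢ²`, and every conjugate of every `βᵢ` has square at most
`m (2n + 1)`, which is at most `(n - 1)²` once `n > 2m + 2`. Since `x ∈ ℚ(β)`, descent on `n`
shows that `K` is generated over `ℚ` by integers whose conjugates are all bounded by `2m + 2`.
Each of these is a root of an integer polynomial of degree at most `d` with bounded
coefficients; there are finitely many such roots in `ℚ̄`, hence finitely many such fields.
-/

open NumberField

open Polynomial

def boundedIntegers (K : Type*) [Field K] (B : ℝ) : Set K :=
  {x | IsIntegral ℤ x ∧ ∀ φ : K →+* ℂ, ‖φ x‖ ≤ B}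

theorem abs_le_sub_one_of_sq_le {m n r s : ℝ} (hm : 0 ≤ m) (hn : 2 * m + 3 ≤ n) (hr : r ≤ n)
    (hs : s ^ 2 ≤ m * (r + n + 1)) : |s| ≤ n - 1 := by
  refine abs_le_of_sq_le_sq ?_ (by linarith)
  calc s ^ 2 ≤ m * (r + n + 1) := hs
    _ ≤ m * (2 * n + 1) := by gcongr; linarith
    _ ≤ (n - 1) ^ 2 := by nlinarith

theorem totallyPositive_add_natCast_succ {K : Type} [Field K] {x : K} {n : ℕ}
    (hx : ∀ φ : K →+* ℂ, ‖φ x‖ ≤ n) : TotallyPositive (x + (n + 1 : ℕ)) := by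
  intro σ
  have hσx : |σ x| ≤ n := by simpa using hx (Complex.ofRealHom.comp σ)
  rw [map_add, map_natCast]
  push_cast
  linarith [neg_abs_le (σ x)]

namespace IsTotallyRealField

variable {K : Type} [Field K]

theorem isReal (htr : IsTotallyRealField K) (φ : K →+* ℂ) : ComplexEmbedding.IsReal φ :=
  ComplexEmbedding.isReal_iff.mpr <| RingHom.ext fun x => Complex.conj_eq_iff_im.mpr (htr φ x)

theorem norm_eq_abs (htr : IsTotallyRealField K) (φ : K →+* ℂ) (x : K) :
    ‖φ x‖ = |(htr.isReal φ).embedding x| := by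
  rw [← (htr.isReal φ).coe_embedding_apply, Complex.norm_real, Real.norm_eq_abs]

theorem norm_le_of_mul_add_eq_sum_sq (htr : IsTotallyRealField K) {m n t : ℕ}
    (hn : 2 * m + 3 ≤ n) {x : K} (hx : ∀ φ : K →+* ℂ, ‖φ x‖ ≤ n) {β : Fin t → K}
    (hβ : m * (x + (n + 1 : ℕ)) = ∑ i, β i ^ 2) (i : Fin t) (φ : K →+* ℂ) :
    ‖φ (β i)‖ ≤ n - 1 := by
  set ψ := (htr.isReal φ).embedding
  have hψ := congrArg ψ hβ
  simp only [map_mul, map_add, map_natCast, map_sum, map_pow] at hψ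
  rw [htr.norm_eq_abs]
  refine abs_le_sub_one_of_sq_le (Nat.cast_nonneg m) (by exact_mod_cast hn)
    (le_of_abs_le (htr.norm_eq_abs φ x ▸ hx φ)) ?_
  calc ψ (β i) ^ 2 ≤ ∑ j, ψ (β j) ^ 2 :=
        Finset.single_le_sum (fun j _ => sq_nonneg (ψ (β j))) (Finset.mem_univ i)
    _ = m * (ψ x + n + 1) := by rw [← hψ]; push_cast; ring

theorem coe_mem_adjoin_boundedIntegers [NumberField K] (htr : IsTotallyRealField K) {m : ℕ}
    (hm : 0 < m) (hsq : ∀ α : 𝓞 K, TotallyPositive (α : K) →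
      ∃ (t : ℕ) (β : Fin t → 𝓞 K), (m : 𝓞 K) * α = ∑ i, β i ^ 2)
    (n : ℕ) (x : 𝓞 K) (hx : ∀ φ : K →+* ℂ, ‖φ x‖ ≤ n) :
    (x : K) ∈ IntermediateField.adjoin ℚ (boundedIntegers K (2 * m + 2)) := by
  set F := IntermediateField.adjoin ℚ (boundedIntegers K (2 * m + 2))
  induction n using Nat.strong_induction_on generalizing x with
  | _ n ih =>
    by_cases hsmall : n ≤ 2 * m + 2
    · exact IntermediateField.subset_adjoin ℚ _
        ⟨x.isIntegral_coe, fun φ => (hx φ).trans (by exact_mod_cast hsmall)⟩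
    obtain ⟨t, β, hβ⟩ :=
      hsq (x + (n + 1 : ℕ)) (by simpa using totallyPositive_add_natCast_succ hx)
    have hβK : (m : K) * (x + (n + 1 : ℕ)) = ∑ i, (β i : K) ^ 2 := by
      simpa using congrArg (algebraMap (𝓞 K) K) hβ
    have hβF (i : Fin t) : (β i : K) ∈ F := ih (n - 1) (by omega) (β i) fun φ => by
      rw [Nat.cast_pred (by omega)]
      exact htr.norm_le_of_mul_add_eq_sum_sq (by omega) hx hβK i φ
    have hx_eq : (x : K) = (m : K)⁻¹ * ∑ i, (β i : K) ^ 2 - (n + 1 : ℕ) := by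
      rw [← hβK, inv_mul_cancel_left₀ (by exact_mod_cast hm.ne'), add_sub_cancel_right]
    rw [hx_eq]
    exact sub_mem (mul_mem (inv_mem (natCast_mem F m))
      (sum_mem fun i _ => pow_mem (hβF i) 2)) (natCast_mem F _)

theorem adjoin_boundedIntegers_eq_top [NumberField K] (htr : IsTotallyRealField K) {m : ℕ}
    (hm : 0 < m) (hsq : ∀ α : 𝓞 K, TotallyPositive (α : K) →
      ∃ (t : ℕ) (β : Fin t → 𝓞 K), (m : 𝓞 K) * α = ∑ i, β i ^ 2) :
    IntermediateField.adjoin ℚ (boundedIntegers K (2 * m + 2)) = ⊤ := by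
  have hint (w : 𝓞 K) :
      (w : K) ∈ IntermediateField.adjoin ℚ (boundedIntegers K (2 * m + 2)) := by
    obtain ⟨b, hb⟩ := (Set.finite_range fun φ : K →+* ℂ => ‖φ w‖).bddAbove
    exact htr.coe_mem_adjoin_boundedIntegers hm hsq ⌈b⌉₊ w
      fun φ => (hb ⟨φ, rfl⟩).trans (Nat.le_ceil b)
  refine eq_top_iff.mpr fun z _ => ?_
  obtain ⟨p, q, -, rfl⟩ := IsFractionRing.div_surjective (A := 𝓞 K) z
  exact div_mem (hint p) (hint q)

end IsTotallyRealField

def boundedRoots (A : Type*) [CommRing A] (d : ℕ) (C : ℤ) : Set A :=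
  {x | ∃ f : ℤ[X], f ≠ 0 ∧ f.natDegree ≤ d ∧ (∀ i, f.coeff i ∈ Set.Icc (-C) C) ∧
    aeval x f = 0}

theorem boundedRoots_finite (A : Type*) [CommRing A] [IsDomain A] [CharZero A] (d : ℕ) (C : ℤ) :
    (boundedRoots A d C).Finite := by
  classical
  refine (bUnion_roots_finite (algebraMap ℤ A) d (Set.finite_Icc (-C) C)).subset ?_
  rintro x ⟨f, hf, hdeg, hcoeff, hroot⟩
  exact Set.mem_iUnion₂.mpr ⟨f, ⟨hdeg, hcoeff⟩, Multiset.mem_toFinset.mpr <|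
    (mem_roots_map_of_injective (RingHom.injective_int _) hf).mpr hroot⟩

theorem mem_boundedRoots_of_mem_boundedIntegers {K : Type*} [Field K] [NumberField K]
    {A : Type*} [Field A] [Algebra K A] {B : ℝ} {x : K} (hx : x ∈ boundedIntegers K B) :
    algebraMap K A x ∈ boundedRoots A (Module.finrank ℚ K)
      ⌈max B 1 ^ Module.finrank ℚ K *
        (Module.finrank ℚ K).choose (Module.finrank ℚ K / 2)⌉₊ := by
  have hminpoly := minpoly.isIntegrallyClosed_eq_field_fractions' ℚ hx.1
  refine ⟨minpoly ℤ x, minpoly.ne_zero hx.1, ?_, fun i => ?_, ?_⟩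
  · rw [← (minpoly.monic hx.1).natDegree_map (algebraMap ℤ ℚ), ← hminpoly]
    exact minpoly.natDegree_le x
  · rw [Set.mem_Icc, ← abs_le, ← @Int.cast_le ℝ]
    refine (Eq.trans_le ?_ <| NumberField.Embeddings.coeff_bdd_of_norm_le hx.2 i).trans
      (by push_cast; exact Nat.le_ceil _)
    rw [hminpoly, coeff_map, eq_intCast, Int.norm_cast_rat, Int.norm_eq_abs, Int.cast_abs]
  · rw [aeval_algebraMap_apply, minpoly.aeval, map_zero]

theorem finite_setOf_adjoin_boundedIntegers_eq_top {A : Type*} [Field A] [CharZero A]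
    (d : ℕ) (B : ℝ) :
    {K : IntermediateField ℚ A | FiniteDimensional ℚ K ∧ Module.finrank ℚ K = d ∧
      IntermediateField.adjoin ℚ (boundedIntegers K B) = ⊤}.Finite := by
  refine (((boundedRoots_finite A d ⌈max B 1 ^ d * d.choose (d / 2)⌉₊).finite_subsets).image
    (IntermediateField.adjoin ℚ)).subset ?_
  rintro K ⟨hfd, rfl, htop⟩
  have : NumberField K := ⟨⟩
  refine ⟨Subtype.val '' boundedIntegers K B, ?_, ?_⟩
  · rintro _ ⟨x, hx, rfl⟩
    exact mem_boundedRoots_of_mem_boundedIntegers (A := A) hx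
  · rw [← IntermediateField.lift_adjoin]
    exact (congrArg IntermediateField.lift htop).trans (IntermediateField.lift_top (K := K))

theorem finitely_many_fields_m_sums_of_squares_general (m d : ℕ) (hm : 0 < m) :
    {K : IntermediateField ℚ (AlgebraicClosure ℚ) |
      FiniteDimensional ℚ K ∧ Module.finrank ℚ K = d ∧ IsTotallyRealField K ∧
      ∀ α : 𝓞 K, TotallyPositive (α : K) →
        ∃ (t : ℕ) (β : Fin t → 𝓞 K), (m : 𝓞 K) * α = ∑ i, β i ^ 2}.Finite := by
  refine (finite_setOf_adjoin_boundedIntegers_eq_top d (2 * m + 2)).subset ?_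
  rintro K ⟨hfd, hrank, htr, hsq⟩
  have : NumberField K := ⟨⟩
  exact ⟨hfd, hrank, htr.adjoin_boundedIntegers_eq_top hm hsq⟩

/-- For all positive integers `m` and `d`, there are only finitely many totally real number
fields `K` of degree `d` (inside a fixed algebraic closure of `ℚ`) such that every element of
`m·𝓞 K⁺` is a sum of squares of elements of `𝓞 K`. -/
theorem finitely_many_fields_m_sums_of_squares (m d : ℕ) (hm : 0 < m) (hd : 0 < d) :
    {K : IntermediateField ℚ (AlgebraicClosure ℚ) |
      FiniteDimensional ℚ K ∧ Module.finrank ℚ K = d ∧ IsTotallyRealField K ∧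
      ∀ α : 𝓞 K, TotallyPositive (α : K) →
        ∃ (t : ℕ) (β : Fin t → 𝓞 K), (m : 𝓞 K) * α = ∑ i, β i ^ 2}.Finite :=
  finitely_many_fields_m_sums_of_squares_general m d hm
end

section
/- Let K be a totally real number field such that for every α ∈ O_K⁺ the element 2α is a sum of squares of elements of O_K. Then K is generated as a field extension of ℚ by the set of elements α ∈ O_K with house ⌈α⌉ < 2 + √6; that is, the subfield of K generated over ℚ by {α ∈ O_K : ⌈α⌉ < 2 + √6} equals K. -/
open NumberField

/-!
Let `F` be a subfield of `K` containing the algebraic integers of house `< 2 + √6`. The house is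
Northcott on `𝓞 K`, so if `𝓞 K ⊄ F` there is `β ∉ F` of minimal house `v ≥ 2 + √6`, and `β ∉ ℤ`.
Choose the embedding `σ₀` minimising `σ₀ β` and put `z = ⌊σ₀ β⌋`. Then `β - z` is totally
positive, so `2 (β - z) = ∑ γᵢ²`, and for every real embedding `σ`
`σ(γᵢ)² ≤ 2 (σ β - z) < 2 (v + v + 1) ≤ v²`, the last step being `v² - 4v - 2 ≥ 0`, i.e.
`v ≥ 2 + √6`. Hence each `γᵢ` has house `< v`, lies in `F`, and so does `β = z + ∑ γᵢ² / 2`.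
Since `K` is the fraction field of `𝓞 K`, `F = K`.
-/

lemma sq_apply_le_two_mul_of_two_mul_eq_sum_sq {R : Type*} [CommRing R] (σ : R →+* ℝ)
    {α : R} {t : ℕ} {γ : Fin t → R} (h : 2 * α = ∑ i, γ i ^ 2) (i : Fin t) :
    σ (γ i) ^ 2 ≤ 2 * σ α := by
  have hσ := congrArg σ h
  simp only [map_mul, map_ofNat, map_sum, map_pow] at hσ
  exact hσ ▸ Finset.single_le_sum (fun j _ => sq_nonneg (σ (γ j))) (Finset.mem_univ i)

lemma four_mul_add_two_le_sq {v : ℝ} (hv : 2 + √6 ≤ v) : 4 * v + 2 ≤ v ^ 2 := by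
  nlinarith [Real.sq_sqrt (show (0 : ℝ) ≤ 6 by norm_num), Real.sqrt_nonneg 6]

lemma IsTotallyRealField.isReal_s10 {K : Type} [Field K] (hK : IsTotallyRealField K)
    (φ : K →+* ℂ) : ComplexEmbedding.IsReal φ :=
  ComplexEmbedding.isReal_iff.mpr <| RingHom.ext fun x => Complex.conj_eq_iff_im.mpr (hK φ x)

section RealHouse

variable {K : Type} [Field K] [NumberField K]

lemma IsTotallyRealField.nonempty_ringHom_real (hK : IsTotallyRealField K) :
    Nonempty (K →+* ℝ) :=
  ⟨(hK.isReal_s10 (Classical.arbitrary _)).embedding⟩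

lemma abs_le_realHouse_s10 (σ : K →+* ℝ) (x : K) : |σ x| ≤ realHouse x :=
  le_ciSup (f := fun σ : K →+* ℝ => |σ x|) (Set.finite_range _).bddAbove σ

lemma realHouse_lt_of_forall_abs_lt [Nonempty (K →+* ℝ)] {x : K} {a : ℝ}
    (hx : ∀ σ : K →+* ℝ, |σ x| < a) : realHouse x < a := by
  obtain ⟨σ, hσ⟩ := exists_eq_ciSup_of_finite (f := fun σ : K →+* ℝ => |σ x|)
  rw [realHouse, ← hσ]
  exact hx σ

lemma IsTotallyRealField.norm_le_realHouse (hK : IsTotallyRealField K) (φ : K →+* ℂ) (x : K) :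
    ‖φ x‖ ≤ realHouse x := by
  rw [← (hK.isReal_s10 φ).coe_embedding_apply, Complex.norm_real, Real.norm_eq_abs]
  exact abs_le_realHouse_s10 _ x

lemma IsTotallyRealField.northcott_realHouse (hK : IsTotallyRealField K) :
    Northcott (fun β : 𝓞 K => realHouse (β : K)) where
  finite_le b := by
    refine ((Embeddings.finite_of_norm_le K ℂ b).preimage
      RingOfIntegers.coe_injective.injOn).subset fun β hβ => ?_
    exact ⟨β.isIntegral_coe, fun φ => (hK.norm_le_realHouse φ β).trans hβ⟩

lemma exists_two_mul_sub_intCast_eq_sum_sq_of_realHouse_ge [Nonempty (K →+* ℝ)]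
    (h : ∀ α : 𝓞 K, TotallyPositive (α : K) →
      ∃ (t : ℕ) (β : Fin t → 𝓞 K), 2 * α = ∑ i, β i ^ 2)
    {β : 𝓞 K} (hβ : ∀ n : ℤ, β ≠ n) (hv : 2 + √6 ≤ realHouse (β : K)) :
    ∃ (z : ℤ) (t : ℕ) (γ : Fin t → 𝓞 K), 2 * (β - z) = ∑ i, γ i ^ 2 ∧
      ∀ i, realHouse (γ i : K) < realHouse (β : K) := by
  set v := realHouse (β : K)
  obtain ⟨σ₀, hσ₀⟩ := Finite.exists_min fun σ : K →+* ℝ => σ β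
  set z := ⌊σ₀ β⌋
  have hz : (z : ℝ) < σ₀ β := by
    refine (Int.floor_le _).lt_of_ne fun heq => hβ z ?_
    apply RingOfIntegers.coe_injective
    apply σ₀.injective
    simpa using heq.symm
  obtain ⟨t, γ, hγ⟩ := h (β - z) fun σ => by
    simpa using hz.trans_le (hσ₀ σ)
  refine ⟨z, t, γ, hγ, fun i => realHouse_lt_of_forall_abs_lt fun σ => ?_⟩
  have hγσ := sq_apply_le_two_mul_of_two_mul_eq_sum_sq (σ.comp (algebraMap (𝓞 K) K)) hγ i
  simp only [RingHom.comp_apply, map_sub, map_intCast] at hγσ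
  have hσβ : σ β ≤ v := (le_abs_self _).trans (abs_le_realHouse_s10 σ β)
  have hσ₀β : -v ≤ σ₀ β := neg_le_of_abs_le (abs_le_realHouse_s10 σ₀ β)
  have hz' : σ₀ β < z + 1 := Int.lt_floor_add_one _
  refine abs_lt_of_sq_lt_sq ?_ (by linarith [Real.sqrt_nonneg 6])
  linarith [four_mul_add_two_le_sq hv]

theorem coe_mem_of_forall_realHouse_lt_mem (hK : IsTotallyRealField K)
    (h : ∀ α : 𝓞 K, TotallyPositive (α : K) →
      ∃ (t : ℕ) (β : Fin t → 𝓞 K), 2 * α = ∑ i, β i ^ 2)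
    {F : Subfield K} (hF : ∀ x : K, IsIntegral ℤ x → realHouse x < 2 + √6 → x ∈ F)
    (β : 𝓞 K) : (β : K) ∈ F := by
  have := hK.northcott_realHouse
  have := hK.nonempty_ringHom_real
  by_contra hβ
  obtain ⟨β, hβ, hmin⟩ := Northcott.exists_min_image (fun β : 𝓞 K => realHouse (β : K))
    {β | (β : K) ∉ F} ⟨β, hβ⟩
  refine hβ ?_
  rcases lt_or_ge (realHouse (β : K)) (2 + √6) with hsmall | hlarge
  · exact hF _ β.isIntegral_coe hsmall
  by_cases hint : ∃ n : ℤ, β = n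
  · obtain ⟨n, rfl⟩ := hint
    simp
  obtain ⟨z, t, γ, hγ, hlt⟩ :=
    exists_two_mul_sub_intCast_eq_sum_sq_of_realHouse_ge h (fun n hn => hint ⟨n, hn⟩) hlarge
  have hγF (i : Fin t) : (γ i : K) ∈ F := by
    by_contra hi
    exact (hlt i).not_ge (hmin (γ i) hi)
  have hβ_eq : (β : K) = z + (∑ i, (γ i : K) ^ 2) / 2 := by
    have := congrArg (algebraMap (𝓞 K) K) hγ
    simp only [map_mul, map_sub, map_intCast, map_ofNat, map_sum, map_pow] at this
    rw [← this]
    ring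
  rw [hβ_eq]
  exact add_mem (intCast_mem F z)
    (div_mem (sum_mem fun i _ => pow_mem (hγF i) 2) (ofNat_mem F 2))

end RealHouse

/-- If every element of `2·𝓞 K⁺` is a sum of squares in `𝓞 K`, then `K` is generated over `ℚ`
by the algebraic integers in `K` of house less than `2 + √6`. -/
theorem generated_by_small_house (K : Type) [Field K] [NumberField K]
    (hK : IsTotallyRealField K)
    (h : ∀ α : 𝓞 K, TotallyPositive (α : K) →
      ∃ (t : ℕ) (β : Fin t → 𝓞 K), 2 * α = ∑ i, β i ^ 2) :
    IntermediateField.adjoin ℚ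
      {x : K | IsIntegral ℤ x ∧ realHouse x < 2 + Real.sqrt 6} = ⊤ := by
  set F := IntermediateField.adjoin ℚ {x : K | IsIntegral ℤ x ∧ realHouse x < 2 + Real.sqrt 6}
  have hF (x : K) (hx : IsIntegral ℤ x) (hsmall : realHouse x < 2 + √6) : x ∈ F.toSubfield :=
    IntermediateField.subset_adjoin _ _ ⟨hx, hsmall⟩
  refine eq_top_iff.mpr fun x _ => ?_
  obtain ⟨a, b, -, rfl⟩ := IsFractionRing.div_surjective (𝓞 K) x
  exact div_mem (coe_mem_of_forall_realHouse_lt_mem hK h hF a)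
    (coe_mem_of_forall_realHouse_lt_mem hK h hF b)
end

section
/- Let F be a totally real number field, let d, r be positive integers, let Q be a quadratic form on F^r with coefficients in F that is totally positive definite (positive definite under every embedding F → ℝ), and let ℓ be a finitely generated O_F-submodule of F^r that spans F^r and satisfies Q(v) ∈ O_F for all v ∈ ℓ. Then there exists a positive integer m such that for every totally real number field K containing F with [K:ℚ] = d and every finitely generated O_K-submodule M of K^r satisfying Q(w) ∈ O_K for all w ∈ M and containing the O_K-span ℓ_K of ℓ inside K^r, one has m·M ⊆ ℓ_K. -/
open NumberField

/-! Choose a basis `e` of `F^r` inside `ℓ` and let `G` be its Gram matrix for the polar form of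
`Q`. Its entries are integers of `F`, and it is nonsingular because `Q` is definite at a real
place of `F`. For `w ∈ M` the pairings of `w` with the `e i` are integral, so by Cramer's rule
`det G` times the coordinates of `w` in the basis `e` are integral. Any positive integer that
`det G` divides in `𝓞 F`, such as the absolute norm of `det G`, therefore works for every `K`. -/

open Matrix

section PolarMatrix

variable {R : Type} [CommRing R] {r : ℕ}

def polarMatrix (a : Fin r → Fin r → R) : Matrix (Fin r) (Fin r) R :=
  of fun i j => (if i ≤ j then a i j else 0) + (if j ≤ i then a j i else 0)

lemma polar_quadEval (a : Fin r → Fin r → R) (v w : Fin r → R) :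
    QuadraticMap.polar (quadEval a) v w = v ⬝ᵥ polarMatrix a *ᵥ w := by
  simp only [QuadraticMap.polar, quadEval, Finset.sum_filter, Fintype.sum_prod_type, dotProduct,
    mulVec, polarMatrix, of_apply, add_mul, mul_add, Finset.mul_sum, Finset.sum_add_distrib,
    Pi.add_apply]
  have upper : ∑ i, ∑ j, v i * ((if i ≤ j then a i j else 0) * w j) =
      ∑ i, ∑ j, if i ≤ j then a i j * v i * w j else 0 :=
    Finset.sum_congr rfl fun i _ => Finset.sum_congr rfl fun j _ => by split_ifs <;> ring
  have lower : ∑ i, ∑ j, v i * ((if j ≤ i then a j i else 0) * w j) =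
      ∑ i, ∑ j, if i ≤ j then a i j * w i * v j else 0 := by
    rw [Finset.sum_comm]
    exact Finset.sum_congr rfl fun i _ => Finset.sum_congr rfl fun j _ => by split_ifs <;> ring
  rw [upper, lower]
  abel

lemma dotProduct_polarMatrix_self (a : Fin r → Fin r → R) (v : Fin r → R) :
    v ⬝ᵥ polarMatrix a *ᵥ v = 2 * quadEval a v := by
  rw [← polar_quadEval, QuadraticMap.polar, quadEval, quadEval, Finset.mul_sum,
    ← Finset.sum_sub_distrib, ← Finset.sum_sub_distrib]
  refine Finset.sum_congr rfl fun p _ => ?_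
  simp only [Pi.add_apply]
  ring

lemma polarMatrix_transpose (a : Fin r → Fin r → R) : (polarMatrix a)ᵀ = polarMatrix a := by
  ext i j
  simp [polarMatrix, add_comm]

lemma map_polarMatrix {S : Type} [CommRing S] (f : R →+* S) (a : Fin r → Fin r → R) :
    (polarMatrix a).map f = polarMatrix fun i j => f (a i j) := by
  ext i j
  simp [polarMatrix, apply_ite f]

end PolarMatrix

lemma posDef_polarMatrix {r : ℕ} {a : Fin r → Fin r → ℝ} (ha : ∀ v, v ≠ 0 → 0 < quadEval a v) :
    (polarMatrix a).PosDef :=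
  .of_dotProduct_mulVec_pos (polarMatrix_transpose a) fun v hv => by
    simpa [dotProduct_polarMatrix_self] using ha v hv

lemma det_polarMatrix_ne_zero {R : Type} [CommRing R] {r : ℕ} {a : Fin r → Fin r → R}
    (τ : R →+* ℝ) (hQ : ∀ v : Fin r → ℝ, v ≠ 0 → 0 < quadEval (fun i j => τ (a i j)) v) :
    (polarMatrix a).det ≠ 0 := by
  intro h
  have hpos := (posDef_polarMatrix hQ).det_pos
  rw [← map_polarMatrix, ← RingHom.mapMatrix_apply, ← RingHom.map_det, h, map_zero] at hpos
  exact hpos.false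

lemma isIntegral_polar_of_mem {A V K : Type*} [Semiring A] [AddCommGroup V] [Module A V]
    [CommRing K] {f : V → K} {M : Submodule A V} (hf : ∀ v ∈ M, IsIntegral ℤ (f v))
    {v w : V} (hv : v ∈ M) (hw : w ∈ M) : IsIntegral ℤ (QuadraticMap.polar f v w) :=
  ((hf _ (M.add_mem hv hw)).sub (hf v hv)).sub (hf w hw)

lemma IsTotallyRealField.nonempty_ringHom_real_s16 {F : Type} [Field F] [NumberField F]
    (hF : IsTotallyRealField F) : Nonempty (F →+* ℝ) := by
  obtain ⟨σ⟩ : Nonempty (F →+* ℂ) := inferInstance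
  have hσ : ComplexEmbedding.IsReal σ := ComplexEmbedding.isReal_iff.mpr <| RingHom.ext fun x => by
    rw [ComplexEmbedding.conjugate_coe_eq, Complex.conj_eq_iff_im]
    exact hF σ x
  exact ⟨hσ.embedding⟩

lemma exists_pos_nat_dvd {S : Type*} [CommRing S] [IsDedekindDomain S] [Module.Free ℤ S]
    [Module.Finite ℤ S] {x : S} (hx : x ≠ 0) : ∃ m : ℕ, 0 < m ∧ x ∣ m := by
  refine ⟨Ideal.absNorm (Ideal.span {x}), Nat.pos_of_ne_zero ?_, ?_⟩
  · rwa [Ne, Ideal.absNorm_eq_zero_iff, Ideal.span_singleton_eq_bot]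
  · exact Ideal.mem_span_singleton.mp (Ideal.absNorm_mem _)

namespace Matrix

variable {n K : Type*} [Fintype n]

lemma mul_mul_transpose_apply [CommRing K] (E S : Matrix n n K) (i k : n) :
    (E * S * Eᵀ) i k = E i ⬝ᵥ S *ᵥ E k := by
  simp only [mul_apply, transpose_apply, dotProduct, mulVec, Finset.sum_mul, Finset.mul_sum,
    mul_assoc]
  exact Finset.sum_comm

variable [DecidableEq n]

lemma exists_rows_mem_det_ne_zero [Field K] {s : Set (n → K)}
    (hs : Submodule.span K s = ⊤) : ∃ E : Matrix n n K, (∀ i, E i ∈ s) ∧ E.det ≠ 0 := by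
  obtain ⟨t, hts, hspan, hli⟩ := exists_linearIndependent K s
  let b := Module.Basis.mk hli (by rw [Subtype.range_coe, hspan, hs])
  let e := (Pi.basisFun K n).indexEquiv b
  refine ⟨fun i => e i, fun i => hts (e i).2, ?_⟩
  exact (isUnit_iff_isUnit_det _).mp (linearIndependent_rows_iff_isUnit.mp
    (hli.comp e e.injective)) |>.ne_zero

lemma algebraMap_det_mul_mem_range {R : Type*} [CommRing R] [CommRing K] [Algebra R K]
    (G : Matrix n n R) {c : n → K}
    (hc : ∀ k, (G.map (algebraMap R K) *ᵥ c) k ∈ (algebraMap R K).range) (i : n) :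
    algebraMap R K G.det * c i ∈ (algebraMap R K).range := by
  set f := algebraMap R K
  have adj : f G.det • c = G.adjugate.map f *ᵥ (G.map f *ᵥ c) := by
    rw [mulVec_mulVec, ← RingHom.mapMatrix_apply, ← RingHom.mapMatrix_apply, RingHom.map_adjugate,
      adjugate_mul, smul_mulVec, one_mulVec, RingHom.map_det]
  rw [← smul_eq_mul, ← Pi.smul_apply, adj]
  exact Subring.sum_mem _ fun k _ => Subring.mul_mem _ ⟨_, rfl⟩ (hc k)

lemma smul_mem_span_rows_of_dotProduct_mem {R : Type*} [CommRing R] [Field K] [Algebra R K]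
    {E S : Matrix n n K} (hE : E.det ≠ 0) {G : Matrix n n R}
    (hG : G.map (algebraMap R K) = E * S * Eᵀ) {m : R} (hm : G.det ∣ m) {w : n → K}
    (hw : ∀ k, E k ⬝ᵥ S *ᵥ w ∈ (algebraMap R K).range) :
    m • w ∈ Submodule.span R (Set.range E) := by
  obtain ⟨t, rfl⟩ := hm
  set c := Eᵀ⁻¹ *ᵥ w
  have hwc : w = Eᵀ *ᵥ c := by
    rw [mulVec_mulVec, mul_nonsing_inv _ (by simpa using hE), one_mulVec]
  have hGc : ∀ k, (G.map (algebraMap R K) *ᵥ c) k ∈ (algebraMap R K).range := fun k => by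
    rw [hG, ← mulVec_mulVec, ← hwc, ← mulVec_mulVec]
    exact hw k
  rw [hwc, mulVec_transpose, vecMul_eq_sum, Finset.smul_sum]
  refine Submodule.sum_mem _ fun i _ => ?_
  obtain ⟨x, hx⟩ :=
    Subring.mul_mem _ (RingHom.mem_range_self _ t) (algebraMap_det_mul_mem_range G hGc i)
  rw [← smul_assoc, Algebra.smul_def (G.det * t), map_mul, mul_comm (algebraMap R K G.det),
    mul_assoc, ← hx, algebraMap_smul]
  exact Submodule.smul_mem _ _ (Submodule.subset_span ⟨i, rfl⟩)

end Matrix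

lemma exists_gram_matrix {F : Type} [Field F] {r : ℕ} {a : Fin r → Fin r → F} (τ : F →+* ℝ)
    (hQ : ∀ v : Fin r → ℝ, v ≠ 0 → 0 < quadEval (fun i j => τ (a i j)) v)
    {ℓ : Submodule (𝓞 F) (Fin r → F)} (hspan : Submodule.span F (ℓ : Set (Fin r → F)) = ⊤)
    (hint : ∀ v ∈ ℓ, IsIntegral ℤ (quadEval a v)) :
    ∃ (E : Matrix (Fin r) (Fin r) F) (G : Matrix (Fin r) (Fin r) (𝓞 F)),
      (∀ i, E i ∈ ℓ) ∧ E.det ≠ 0 ∧ G.det ≠ 0 ∧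
        G.map (algebraMap (𝓞 F) F) = E * polarMatrix a * Eᵀ := by
  obtain ⟨E, hEℓ, hE⟩ := exists_rows_mem_det_ne_zero hspan
  let G : Matrix (Fin r) (Fin r) (𝓞 F) := of fun i k =>
    ⟨QuadraticMap.polar (quadEval a) (E i) (E k), isIntegral_polar_of_mem hint (hEℓ i) (hEℓ k)⟩
  have hGE : G.map (algebraMap (𝓞 F) F) = E * polarMatrix a * Eᵀ := by
    ext i k
    rw [mul_mul_transpose_apply, ← polar_quadEval]
    rfl
  refine ⟨E, G, hEℓ, hE, fun hG => ?_, hGE⟩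
  have := congrArg det hGE
  rw [← RingHom.mapMatrix_apply, ← RingHom.map_det, hG, map_zero, det_mul, det_mul,
    det_transpose] at this
  exact mul_ne_zero (mul_ne_zero hE (det_polarMatrix_ne_zero τ hQ)) hE this.symm

theorem exists_multiplier_into_extended_lattice_general (F : Type) [Field F] [NumberField F]
    (hF : IsTotallyRealField F) (d r : ℕ)
    (a : Fin r → Fin r → F)
    (hQ : ∀ σ : F →+* ℝ, ∀ v : Fin r → ℝ, v ≠ 0 → 0 < quadEval (fun i j => σ (a i j)) v)
    (ℓ : Submodule (𝓞 F) (Fin r → F))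
    (hspan : Submodule.span F (ℓ : Set (Fin r → F)) = ⊤)
    (hint : ∀ v ∈ ℓ, IsIntegral ℤ (quadEval a v)) :
    ∃ m : ℕ, 0 < m ∧
      ∀ (K : Type) [Field K] [NumberField K] [Algebra F K],
        IsTotallyRealField K → Module.finrank ℚ K = d →
        ∀ M : Submodule (𝓞 K) (Fin r → K), M.FG →
          (∀ w ∈ M, IsIntegral ℤ (quadEval (fun i j => algebraMap F K (a i j)) w)) →
          Submodule.span (𝓞 K)
              ((fun v : Fin r → F => fun i => algebraMap F K (v i)) '' (ℓ : Set (Fin r → F)))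
            ≤ M →
          ∀ w ∈ M, m • w ∈ Submodule.span (𝓞 K)
              ((fun v : Fin r → F => fun i => algebraMap F K (v i)) ''
                (ℓ : Set (Fin r → F))) := by
  obtain ⟨τ⟩ := hF.nonempty_ringHom_real_s16
  obtain ⟨E, G, hEℓ, hE, hG, hGE⟩ := exists_gram_matrix τ (hQ τ) hspan hint
  obtain ⟨m, hm, hGm⟩ := exists_pos_nat_dvd hG
  refine ⟨m, hm, fun K _ _ _ _ _ M _ hM hℓM w hw => ?_⟩
  set φ := algebraMap F K
  have hEK : ∀ i, E.map φ i ∈ Submodule.span (𝓞 K)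
      ((fun v : Fin r → F => fun i => φ (v i)) '' (ℓ : Set (Fin r → F))) :=
    fun i => Submodule.subset_span ⟨E i, hEℓ i, rfl⟩
  have hGK : (G.map (algebraMap (𝓞 F) (𝓞 K))).map (algebraMap (𝓞 K) K) =
      E.map φ * polarMatrix (fun i j => φ (a i j)) * (E.map φ)ᵀ := by
    rw [map_map, ← map_polarMatrix, ← transpose_map, ← Matrix.map_mul,
      ← Matrix.map_mul, ← hGE, map_map]
    rfl
  have hdvd : (G.map (algebraMap (𝓞 F) (𝓞 K))).det ∣ (m : 𝓞 K) := by
    rw [← RingHom.mapMatrix_apply, ← RingHom.map_det, ← map_natCast (algebraMap (𝓞 F) (𝓞 K))]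
    exact map_dvd _ hGm
  have key := smul_mem_span_rows_of_dotProduct_mem
    (by rwa [← RingHom.mapMatrix_apply, ← RingHom.map_det, Ne, map_eq_zero]) hGK hdvd
    fun k => by
      rw [← polar_quadEval, RingHom.mem_range, ← IsIntegralClosure.isIntegral_iff (R := ℤ)]
      exact isIntegral_polar_of_mem hM (hℓM (hEK k)) hw
  rw [← Nat.cast_smul_eq_nsmul (𝓞 K)]
  exact Submodule.span_le.mpr (Set.range_subset_iff.mpr hEK) key

set_option synthInstance.maxHeartbeats 1000000 in
/-- Let `F` be totally real, `Q` totally positive definite on `F^r`, and `ℓ ⊆ F^r` a finitely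
generated `𝓞 F`-submodule spanning `F^r` with `Q(ℓ) ⊆ 𝓞 F`. Then there is a positive integer
`m` such that for every totally real number field `K ⊇ F` of degree `d` over `ℚ` and every
finitely generated `𝓞 K`-submodule `M ⊆ K^r` with `Q(M) ⊆ 𝓞 K` containing the `𝓞 K`-span
`ℓ_K` of `ℓ`, one has `m·M ⊆ ℓ_K`. -/
theorem exists_multiplier_into_extended_lattice (F : Type) [Field F] [NumberField F]
    (hF : IsTotallyRealField F) (d r : ℕ) (hd : 0 < d) (hr : 0 < r)
    (a : Fin r → Fin r → F)
    (hQ : ∀ σ : F →+* ℝ, ∀ v : Fin r → ℝ, v ≠ 0 → 0 < quadEval (fun i j => σ (a i j)) v)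
    (ℓ : Submodule (𝓞 F) (Fin r → F)) (hfg : ℓ.FG)
    (hspan : Submodule.span F (ℓ : Set (Fin r → F)) = ⊤)
    (hint : ∀ v ∈ ℓ, IsIntegral ℤ (quadEval a v)) :
    ∃ m : ℕ, 0 < m ∧
      ∀ (K : Type) [Field K] [NumberField K] [Algebra F K],
        IsTotallyRealField K → Module.finrank ℚ K = d →
        ∀ M : Submodule (𝓞 K) (Fin r → K), M.FG →
          (∀ w ∈ M, IsIntegral ℤ (quadEval (fun i j => algebraMap F K (a i j)) w)) →
          Submodule.span (𝓞 K)
              ((fun v : Fin r → F => fun i => algebraMap F K (v i)) '' (ℓ : Set (Fin r → F)))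
            ≤ M →
          ∀ w ∈ M, m • w ∈ Submodule.span (𝓞 K)
              ((fun v : Fin r → F => fun i => algebraMap F K (v i)) ''
                (ℓ : Set (Fin r → F))) :=
  exists_multiplier_into_extended_lattice_general F hF d r a hQ ℓ hspan hint
end
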